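/- Let γ ∈ (0,1), p ≥ 1, and define for a continuous f : [0,1] → ℝ the quantity U_{γ,p}(f) = ( ∫_0^1 ∫_v^{min(4v,1)} |f(u)-f(v)|^{2p} / (u-v)^{2γp+2} du dv )^{1/(2p)}. If U_{γ,p}(f) < ∞, then f is γ-Hölder continuous on [0,1] and there is a universal constant c > 0 with ‖f‖_γ ≤ c · U_{γ,p}(f). -/

import Mathlib

/-!
For adjacent intervals `J = [c, d]`, `J' = [d, d']` with `J × J'` inside `garsiaRegion`,
Jensen's inequality bounds `|⨍_{J'} f - ⨍_J f| ^ (2p)` by the average of `|f u - f v| ^ (2p)`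
over `J × J'`, hence by `(d' - c) ^ (2pγ + 2) / (|J| |J'|) · U ^ (2p)`; for intervals of
comparable length this is `|⨍_{J'} f - ⨍_J f| ≤ 16 U (d' - c) ^ γ`. Chains of dyadic intervals
shrinking to `a` from the right and to `b` from the left, joined by the pair `[a, (a+b)/2]`,
`[(a+b)/2, b]`, bound `|f b - f a|` by a geometric series (convergent as `γ > 0`) whenever
`b ≤ 4a`. Any pair `s < t` is connected through the points `s + (t - s) / 2 ^ k`, consecutive
ones of which always satisfy `b ≤ 4a`.
-/

open MeasureTheory Set

def garsiaRegion : Set (ℝ × ℝ) :=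
  {q : ℝ × ℝ | q.1 ∈ Icc (0:ℝ) 1 ∧ q.1 ≤ q.2 ∧ q.2 ≤ min (4 * q.1) 1}

open Filter Topology

noncomputable def garsiaIntegrand (γ : ℝ) (p : ℕ) (f : ℝ → ℝ) (q : ℝ × ℝ) : ℝ :=
  |f q.2 - f q.1| ^ (2 * p) / (q.2 - q.1) ^ (2 * (p : ℝ) * γ + 2)

noncomputable def garsiaIntegral (γ : ℝ) (p : ℕ) (f : ℝ → ℝ) : ℝ :=
  ∫ q in garsiaRegion, garsiaIntegrand γ p f q

noncomputable def garsiaU (γ : ℝ) (p : ℕ) (f : ℝ → ℝ) : ℝ :=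
  garsiaIntegral γ p f ^ (1 / (2 * (p : ℝ)))

theorem average_prod_sub {α : Type*} [MeasurableSpace α] {μ ν : Measure α}
    [IsFiniteMeasure μ] [IsFiniteMeasure ν] [NeZero μ] [NeZero ν] {f : α → ℝ}
    (hμ : Integrable f μ) (hν : Integrable f ν) :
    ⨍ q, (f q.2 - f q.1) ∂(μ.prod ν) = (⨍ y, f y ∂ν) - ⨍ x, f x ∂μ := by
  have hμ0 : μ.real univ ≠ 0 := by simp [measureReal_def, ENNReal.toReal_eq_zero_iff, NeZero.ne]
  have hν0 : ν.real univ ≠ 0 := by simp [measureReal_def, ENNReal.toReal_eq_zero_iff, NeZero.ne]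
  rw [average_eq, average_eq, average_eq, integral_sub (hν.comp_snd μ) (hμ.comp_fst ν),
    integral_fun_snd, integral_fun_fst, ← univ_prod_univ, measureReal_prod_prod]
  simp only [smul_eq_mul]
  field_simp

theorem abs_average_sub_average_pow_le {α : Type*} [MeasurableSpace α] {μ ν : Measure α}
    [IsFiniteMeasure μ] [IsFiniteMeasure ν] [NeZero μ] [NeZero ν] {f : α → ℝ}
    (hμ : Integrable f μ) (hν : Integrable f ν) {n : ℕ}
    (hn : Integrable (fun q : α × α => |f q.2 - f q.1| ^ n) (μ.prod ν)) :
    |(⨍ y, f y ∂ν) - ⨍ x, f x ∂μ| ^ n ≤ ⨍ q, |f q.2 - f q.1| ^ n ∂(μ.prod ν) := by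
  have : NeZero (μ.prod ν) := ⟨fun h => by
    simpa [← univ_prod_univ, Measure.prod_prod, NeZero.ne] using congrArg (· univ) h⟩
  rw [← average_prod_sub hμ hν]
  exact (((convexOn_norm (E := ℝ) convex_univ).pow fun x _ => norm_nonneg x) n).map_average_le
    (continuous_norm.pow n).continuousOn isClosed_univ (ae_of_all _ fun _ => mem_univ _)
    ((hν.comp_snd μ).sub (hμ.comp_fst ν)) hn

theorem isClosed_garsiaRegion : IsClosed garsiaRegion :=
  (isClosed_Icc.preimage continuous_fst).inter
    ((isClosed_le continuous_fst continuous_snd).inter (isClosed_le continuous_snd (by fun_prop)))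

theorem Icc_prod_Icc_subset_garsiaRegion {c d d' : ℝ} (hc : 0 ≤ c) (hdd' : d ≤ d')
    (hd' : d' ≤ 1) (h4 : d' ≤ 4 * c) : Icc c d ×ˢ Icc d d' ⊆ garsiaRegion := by
  rintro ⟨x, y⟩ ⟨⟨hcx, hxd⟩, ⟨hdy, hyd'⟩⟩
  exact ⟨⟨hc.trans hcx, by linarith⟩, hxd.trans hdy, le_min (by linarith) (hyd'.trans hd')⟩

theorem neZero_volume_restrict_Icc {c d : ℝ} (h : c < d) : NeZero (volume.restrict (Icc c d)) :=
  have : NeZero (volume (Icc c d)) := ⟨by simpa using h⟩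
  inferInstance

theorem tendsto_setAverage_Icc {S : Set ℝ} (hS : IsClosed S) {f : ℝ → ℝ} (hf : ContinuousOn f S)
    {c d : ℕ → ℝ} (hcd : ∀ k, c k < d k) (hsub : ∀ k, Icc (c k) (d k) ⊆ S) {e : ℝ}
    (hc : Tendsto c atTop (𝓝 e)) (hd : Tendsto d atTop (𝓝 e)) :
    Tendsto (fun k => ⨍ x in Icc (c k) (d k), f x) atTop (𝓝 (f e)) := by
  have hmean : ∀ k, ∃ ξ ∈ Icc (c k) (d k), f ξ = ⨍ x in Icc (c k) (d k), f x := fun k =>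
    exists_eq_setAverage (isConnected_Icc (hcd k).le) (hf.mono (hsub k))
      (hf.mono (hsub k)).integrableOn_Icc (by simp) (by simpa using hcd k)
  choose ξ hξ hfξ using hmean
  have hξS : ∀ k, ξ k ∈ S := fun k => hsub k (hξ k)
  have hξe : Tendsto ξ atTop (𝓝 e) :=
    tendsto_of_tendsto_of_tendsto_of_le_of_le hc hd (fun k => (hξ k).1) fun k => (hξ k).2
  have he : e ∈ S := hS.mem_of_tendsto hξe (Eventually.of_forall hξS)
  refine ((hf e he).tendsto.comp ?_).congr hfξ
  exact tendsto_nhdsWithin_iff.2 ⟨hξe, Eventually.of_forall hξS⟩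

theorem tendsto_div_two_pow (ℓ : ℝ) : Tendsto (fun k : ℕ => ℓ / 2 ^ k) atTop (𝓝 0) :=
  tendsto_const_nhds.div_atTop (tendsto_pow_atTop_atTop_of_one_lt one_lt_two)

theorem div_two_pow_rpow {ℓ : ℝ} (hℓ : 0 ≤ ℓ) (γ : ℝ) (k : ℕ) :
    (ℓ / 2 ^ k) ^ γ = ℓ ^ γ * ((2 : ℝ) ^ γ)⁻¹ ^ k := by
  rw [Real.div_rpow hℓ (by positivity), ← Real.rpow_pow_comm (by norm_num), inv_pow, div_eq_mul_inv]

noncomputable def garsiaConst (γ : ℝ) : ℝ :=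
  16 * (2 / (1 - ((2 : ℝ) ^ γ)⁻¹) + 1) * (((2 : ℝ) ^ γ)⁻¹ / (1 - ((2 : ℝ) ^ γ)⁻¹))

theorem garsiaConst_pos {γ : ℝ} (hγ : 0 < γ) : 0 < garsiaConst γ := by
  have hr : 0 < 1 - ((2 : ℝ) ^ γ)⁻¹ :=
    sub_pos.2 (inv_lt_one_of_one_lt₀ (Real.one_lt_rpow one_lt_two hγ))
  exact mul_pos (mul_pos (by norm_num) (by positivity)) (by positivity)

section

variable {γ : ℝ} {p : ℕ} {f : ℝ → ℝ}

theorem garsiaIntegrand_nonneg {q : ℝ × ℝ} (hq : q.1 ≤ q.2) : 0 ≤ garsiaIntegrand γ p f q :=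
  div_nonneg (by positivity) (Real.rpow_nonneg (sub_nonneg.2 hq) _)

theorem garsiaIntegral_nonneg : 0 ≤ garsiaIntegral γ p f :=
  setIntegral_nonneg isClosed_garsiaRegion.measurableSet fun _ hq => garsiaIntegrand_nonneg hq.2.1

theorem garsiaU_nonneg : 0 ≤ garsiaU γ p f := Real.rpow_nonneg garsiaIntegral_nonneg _

theorem garsiaU_pow (hp : p ≠ 0) : garsiaU γ p f ^ (2 * p) = garsiaIntegral γ p f := by
  rw [garsiaU, show 1 / (2 * (p : ℝ)) = ((2 * p : ℕ) : ℝ)⁻¹ by push_cast; ring]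
  exact Real.rpow_inv_natCast_pow garsiaIntegral_nonneg (by omega)

theorem abs_sub_pow_le_mul_garsiaIntegrand (hp : p ≠ 0) (hγ : 0 ≤ γ) {q : ℝ × ℝ} {δ : ℝ}
    (hq : q.1 ≤ q.2) (hδ : q.2 - q.1 ≤ δ) :
    |f q.2 - f q.1| ^ (2 * p) ≤ δ ^ (2 * (p : ℝ) * γ + 2) * garsiaIntegrand γ p f q := by
  rcases hq.eq_or_lt with heq | hlt
  · rw [heq, sub_self, abs_zero, zero_pow (by omega)]
    exact mul_nonneg (Real.rpow_nonneg (by linarith) _) (garsiaIntegrand_nonneg hq)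
  have hpos : 0 < (q.2 - q.1) ^ (2 * (p : ℝ) * γ + 2) := Real.rpow_pos_of_pos (sub_pos.2 hlt) _
  calc |f q.2 - f q.1| ^ (2 * p)
      = (q.2 - q.1) ^ (2 * (p : ℝ) * γ + 2) * garsiaIntegrand γ p f q := by
        rw [garsiaIntegrand, mul_div_cancel₀ _ hpos.ne']
    _ ≤ δ ^ (2 * (p : ℝ) * γ + 2) * garsiaIntegrand γ p f q := by
        gcongr
        exact garsiaIntegrand_nonneg hlt.le

theorem setIntegral_abs_sub_pow_le_garsiaIntegral (hp : p ≠ 0) (hγ : 0 ≤ γ)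
    (hint : IntegrableOn (garsiaIntegrand γ p f) garsiaRegion) {P : Set (ℝ × ℝ)}
    (hPR : P ⊆ garsiaRegion) (hPm : MeasurableSet P)
    (hPint : IntegrableOn (fun q : ℝ × ℝ => |f q.2 - f q.1| ^ (2 * p)) P) {δ : ℝ} (hδ : 0 ≤ δ)
    (hPδ : ∀ q ∈ P, q.2 - q.1 ≤ δ) :
    ∫ q in P, |f q.2 - f q.1| ^ (2 * p) ≤ δ ^ (2 * (p : ℝ) * γ + 2) * garsiaIntegral γ p f := by
  rw [garsiaIntegral, ← integral_const_mul]
  calc ∫ q in P, |f q.2 - f q.1| ^ (2 * p)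
      ≤ ∫ q in P, δ ^ (2 * (p : ℝ) * γ + 2) * garsiaIntegrand γ p f q :=
        setIntegral_mono_on hPint ((hint.mono_set hPR).const_mul _) hPm fun q hq =>
          abs_sub_pow_le_mul_garsiaIntegrand hp hγ (hPR hq).2.1 (hPδ q hq)
    _ ≤ ∫ q in garsiaRegion, δ ^ (2 * (p : ℝ) * γ + 2) * garsiaIntegrand γ p f q :=
        setIntegral_mono_set (hint.const_mul _)
          ((ae_restrict_mem isClosed_garsiaRegion.measurableSet).mono fun q hq =>
            mul_nonneg (Real.rpow_nonneg hδ _) (garsiaIntegrand_nonneg hq.2.1))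
          hPR.eventuallyLE

theorem abs_setAverage_Icc_sub_pow_le (hp : p ≠ 0) (hγ : 0 ≤ γ)
    (hf : ContinuousOn f (Icc 0 1)) (hint : IntegrableOn (garsiaIntegrand γ p f) garsiaRegion)
    {c d d' : ℝ} (hc : 0 ≤ c) (hcd : c < d) (hdd' : d < d') (hd' : d' ≤ 1) (h4 : d' ≤ 4 * c) :
    |(⨍ x in Icc d d', f x) - ⨍ x in Icc c d, f x| ^ (2 * p)
      ≤ (d' - c) ^ (2 * (p : ℝ) * γ + 2) / ((d - c) * (d' - d)) * garsiaIntegral γ p f := by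
  have := neZero_volume_restrict_Icc hcd
  have := neZero_volume_restrict_Icc hdd'
  set P := Icc c d ×ˢ Icc d d'
  have hJ : Icc c d ⊆ Icc 0 1 := Icc_subset_Icc hc (by linarith)
  have hJ' : Icc d d' ⊆ Icc 0 1 := Icc_subset_Icc (by linarith) hd'
  have hmeas :
      (volume.restrict (Icc c d)).prod (volume.restrict (Icc d d')) = volume.restrict P := by
    rw [Measure.prod_restrict, Measure.volume_eq_prod]
  have hvol : volume.real P = (d - c) * (d' - d) := by
    rw [Measure.volume_eq_prod, measureReal_prod_prod, Real.volume_real_Icc_of_le hcd.le,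
      Real.volume_real_Icc_of_le hdd'.le]
  have hPint : IntegrableOn (fun q : ℝ × ℝ => |f q.2 - f q.1| ^ (2 * p)) P :=
    ContinuousOn.integrableOn_compact (isCompact_Icc.prod isCompact_Icc)
      ((((hf.mono hJ').comp continuous_snd.continuousOn fun _ hq => hq.2).sub
        ((hf.mono hJ).comp continuous_fst.continuousOn fun _ hq => hq.1)).abs.pow _)
  have hjensen := abs_average_sub_average_pow_le (hf.mono hJ).integrableOn_Icc
    (hf.mono hJ').integrableOn_Icc (by rw [hmeas]; exact hPint)
  have hbound := setIntegral_abs_sub_pow_le_garsiaIntegral hp hγ hint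
    (Icc_prod_Icc_subset_garsiaRegion hc hdd'.le hd' h4) (measurableSet_Icc.prod measurableSet_Icc)
    hPint (δ := d' - c) (by linarith) fun q hq => by linarith [hq.1.1, hq.2.2]
  rw [hmeas] at hjensen
  refine hjensen.trans ?_
  rw [setAverage_eq, hvol, smul_eq_mul, inv_mul_eq_div, div_mul_eq_mul_div]
  exact div_le_div_of_nonneg_right hbound (by nlinarith)

theorem abs_setAverage_Icc_sub_le (hp : p ≠ 0) (hγ : 0 ≤ γ)
    (hf : ContinuousOn f (Icc 0 1)) (hint : IntegrableOn (garsiaIntegrand γ p f) garsiaRegion)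
    {c d d' w : ℝ} (hc : 0 ≤ c) (hcd : c < d) (hdd' : d < d') (hd' : d' ≤ 1) (h4 : d' ≤ 4 * c)
    (hw : d' - c ≤ w) (hwl : w ≤ 4 * (d - c)) (hwr : w ≤ 4 * (d' - d)) :
    |(⨍ x in Icc d d', f x) - ⨍ x in Icc c d, f x| ≤ 16 * garsiaU γ p f * w ^ γ := by
  have hU := garsiaU_nonneg (γ := γ) (p := p) (f := f)
  have hw0 : 0 < w := by linarith
  have hratio : (d' - c) ^ (2 * (p : ℝ) * γ + 2) / ((d - c) * (d' - d))
      ≤ 16 * w ^ (2 * (p : ℝ) * γ) := by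
    have hd'c : 0 < d' - c := by linarith
    rw [div_le_iff₀ (by nlinarith), Real.rpow_add hd'c, Real.rpow_two]
    have hsq : (d' - c) ^ 2 ≤ 16 * ((d - c) * (d' - d)) := by nlinarith
    calc (d' - c) ^ (2 * (p : ℝ) * γ) * (d' - c) ^ 2
        ≤ w ^ (2 * (p : ℝ) * γ) * (16 * ((d - c) * (d' - d))) := by gcongr
      _ = 16 * w ^ (2 * (p : ℝ) * γ) * ((d - c) * (d' - d)) := by ring
  refine (pow_le_pow_iff_left₀ (abs_nonneg _) (by positivity) (by omega : 2 * p ≠ 0)).1 ?_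
  calc |(⨍ x in Icc d d', f x) - ⨍ x in Icc c d, f x| ^ (2 * p)
      ≤ _ := abs_setAverage_Icc_sub_pow_le hp hγ hf hint hc hcd hdd' hd' h4
    _ ≤ 16 * w ^ (2 * (p : ℝ) * γ) * garsiaIntegral γ p f :=
        mul_le_mul_of_nonneg_right hratio garsiaIntegral_nonneg
    _ ≤ (16 * garsiaU γ p f * w ^ γ) ^ (2 * p) := by
        rw [mul_pow, mul_pow, garsiaU_pow hp, ← Real.rpow_mul_natCast hw0.le,
          show γ * ((2 * p : ℕ) : ℝ) = 2 * p * γ by push_cast; ring]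
        have : (16 : ℝ) ≤ 16 ^ (2 * p) := le_self_pow₀ (by norm_num) (by omega)
        have hIw := mul_nonneg (garsiaIntegral_nonneg (γ := γ) (p := p) (f := f))
          (Real.rpow_nonneg hw0.le (2 * p * γ))
        nlinarith

theorem dist_setAverage_Icc_right_le (hp : p ≠ 0) (hγ : 0 < γ)
    (hf : ContinuousOn f (Icc 0 1)) (hint : IntegrableOn (garsiaIntegrand γ p f) garsiaRegion)
    {a ℓ : ℝ} (ha : 0 ≤ a) (hℓ : 0 < ℓ) (h1 : a + ℓ ≤ 1) :
    dist (⨍ x in Icc (a + ℓ / 2) (a + ℓ), f x) (f a)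
      ≤ 16 * garsiaU γ p f * ℓ ^ γ / (1 - ((2 : ℝ) ^ γ)⁻¹) := by
  have hr : ((2 : ℝ) ^ γ)⁻¹ < 1 := inv_lt_one_of_one_lt₀ (Real.one_lt_rpow one_lt_two hγ)
  have hscale (k : ℕ) : 0 < ℓ / 2 ^ k ∧ ℓ / 2 ^ k ≤ ℓ :=
    ⟨by positivity, div_le_self hℓ.le (one_le_pow₀ one_le_two)⟩
  have hstep (k : ℕ) :
      dist (⨍ x in Icc (a + ℓ / 2 ^ (k + 1)) (a + ℓ / 2 ^ k), f x)
        (⨍ x in Icc (a + ℓ / 2 ^ (k + 1 + 1)) (a + ℓ / 2 ^ (k + 1)), f x)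
      ≤ 16 * garsiaU γ p f * ℓ ^ γ * ((2 : ℝ) ^ γ)⁻¹ ^ k := by
    obtain ⟨hh, hhℓ⟩ := hscale k
    rw [show ℓ / 2 ^ (k + 1) = ℓ / 2 ^ k / 2 by ring,
      show ℓ / 2 ^ (k + 1 + 1) = ℓ / 2 ^ k / 4 by ring,
      Real.dist_eq, mul_assoc, ← div_two_pow_rpow hℓ.le]
    exact abs_setAverage_Icc_sub_le hp hγ.le hf hint (by positivity) (by linarith)
      (by linarith) (by linarith) (by linarith) (by linarith) (by linarith) (by linarith)
  have hlim : Tendsto (fun k : ℕ => ⨍ x in Icc (a + ℓ / 2 ^ (k + 1)) (a + ℓ / 2 ^ k), f x)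
      atTop (𝓝 (f a)) := tendsto_setAverage_Icc isClosed_Icc hf
    (fun k => by linarith [hscale (k + 1), show ℓ / 2 ^ (k + 1) = ℓ / 2 ^ k / 2 by ring])
    (fun k => Icc_subset_Icc (by linarith [hscale (k + 1)]) (by linarith [hscale k]))
    (by simpa using tendsto_const_nhds.add ((tendsto_div_two_pow ℓ).comp (tendsto_add_atTop_nat 1)))
    (by simpa using tendsto_const_nhds.add (tendsto_div_two_pow ℓ))
  simpa using dist_le_of_le_geometric_of_tendsto₀ _ _ hr hstep hlim

theorem dist_setAverage_Icc_left_le (hp : p ≠ 0) (hγ : 0 < γ)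
    (hf : ContinuousOn f (Icc 0 1)) (hint : IntegrableOn (garsiaIntegrand γ p f) garsiaRegion)
    {b ℓ : ℝ} (hℓ : 0 < ℓ) (hb : b ≤ 1) (h4 : b ≤ 4 * (b - ℓ)) :
    dist (⨍ x in Icc (b - ℓ) (b - ℓ / 2), f x) (f b)
      ≤ 16 * garsiaU γ p f * ℓ ^ γ / (1 - ((2 : ℝ) ^ γ)⁻¹) := by
  have hr : ((2 : ℝ) ^ γ)⁻¹ < 1 := inv_lt_one_of_one_lt₀ (Real.one_lt_rpow one_lt_two hγ)
  have hscale (k : ℕ) : 0 < ℓ / 2 ^ k ∧ ℓ / 2 ^ k ≤ ℓ :=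
    ⟨by positivity, div_le_self hℓ.le (one_le_pow₀ one_le_two)⟩
  have hstep (k : ℕ) :
      dist (⨍ x in Icc (b - ℓ / 2 ^ k) (b - ℓ / 2 ^ (k + 1)), f x)
        (⨍ x in Icc (b - ℓ / 2 ^ (k + 1)) (b - ℓ / 2 ^ (k + 1 + 1)), f x)
      ≤ 16 * garsiaU γ p f * ℓ ^ γ * ((2 : ℝ) ^ γ)⁻¹ ^ k := by
    obtain ⟨hh, hhℓ⟩ := hscale k
    rw [show ℓ / 2 ^ (k + 1) = ℓ / 2 ^ k / 2 by ring,
      show ℓ / 2 ^ (k + 1 + 1) = ℓ / 2 ^ k / 4 by ring,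
      dist_comm, Real.dist_eq, mul_assoc, ← div_two_pow_rpow hℓ.le]
    exact abs_setAverage_Icc_sub_le hp hγ.le hf hint (by linarith) (by linarith)
      (by linarith) (by linarith) (by linarith) (by linarith) (by linarith) (by linarith)
  have hlim : Tendsto (fun k : ℕ => ⨍ x in Icc (b - ℓ / 2 ^ k) (b - ℓ / 2 ^ (k + 1)), f x)
      atTop (𝓝 (f b)) := tendsto_setAverage_Icc isClosed_Icc hf
    (fun k => by linarith [hscale (k + 1), show ℓ / 2 ^ (k + 1) = ℓ / 2 ^ k / 2 by ring])
    (fun k => Icc_subset_Icc (by linarith [hscale k]) (by linarith [hscale (k + 1)]))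
    (by simpa using tendsto_const_nhds.sub (tendsto_div_two_pow ℓ))
    (by simpa using tendsto_const_nhds.sub ((tendsto_div_two_pow ℓ).comp (tendsto_add_atTop_nat 1)))
  simpa using dist_le_of_le_geometric_of_tendsto₀ _ _ hr hstep hlim

theorem abs_sub_le_of_le_four_mul (hp : p ≠ 0) (hγ : 0 < γ)
    (hf : ContinuousOn f (Icc 0 1)) (hint : IntegrableOn (garsiaIntegrand γ p f) garsiaRegion)
    {a b : ℝ} (ha : 0 ≤ a) (hab : a < b) (hb : b ≤ 1) (h4 : b ≤ 4 * a) :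
    |f b - f a| ≤ 16 * (2 / (1 - ((2 : ℝ) ^ γ)⁻¹) + 1) * garsiaU γ p f * (b - a) ^ γ := by
  have hleft := dist_setAverage_Icc_left_le hp hγ hf hint (sub_pos.2 hab) hb (by linarith)
  have hright := dist_setAverage_Icc_right_le hp hγ hf hint ha (sub_pos.2 hab) (by linarith)
  have hmid := abs_setAverage_Icc_sub_le hp hγ.le hf hint (d := (a + b) / 2) (w := b - a) ha
    (by linarith) (by linarith) hb h4 le_rfl (by linarith) (by linarith)
  rw [sub_sub_cancel, show b - (b - a) / 2 = (a + b) / 2 by ring] at hleft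
  rw [add_sub_cancel, show a + (b - a) / 2 = (a + b) / 2 by ring] at hright
  rw [← Real.dist_eq, dist_comm] at hmid
  rw [dist_comm] at hleft
  calc |f b - f a| = dist (f b) (f a) := (Real.dist_eq _ _).symm
    _ ≤ dist (f b) (⨍ x in Icc a ((a + b) / 2), f x)
        + dist (⨍ x in Icc a ((a + b) / 2), f x) (⨍ x in Icc ((a + b) / 2) b, f x)
        + dist (⨍ x in Icc ((a + b) / 2) b, f x) (f a) := dist_triangle4 _ _ _ _
    _ ≤ _ := add_le_add_three hleft hmid hright
    _ = _ := by ring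

theorem abs_sub_le_garsiaConst_mul (hp : p ≠ 0) (hγ : 0 < γ)
    (hf : ContinuousOn f (Icc 0 1)) (hint : IntegrableOn (garsiaIntegrand γ p f) garsiaRegion)
    {s t : ℝ} (hs : 0 ≤ s) (hst : s < t) (ht : t ≤ 1) :
    |f t - f s| ≤ garsiaConst γ * garsiaU γ p f * (t - s) ^ γ := by
  set r : ℝ := ((2 : ℝ) ^ γ)⁻¹ with hr_def
  have hr : r < 1 := inv_lt_one_of_one_lt₀ (Real.one_lt_rpow one_lt_two hγ)
  have hscale (k : ℕ) : 0 < (t - s) / 2 ^ k ∧ (t - s) / 2 ^ k ≤ t - s :=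
    ⟨by have := sub_pos.2 hst; positivity, div_le_self (by linarith) (one_le_pow₀ one_le_two)⟩
  have hstep (k : ℕ) : dist (f (s + (t - s) / 2 ^ k)) (f (s + (t - s) / 2 ^ (k + 1)))
      ≤ 16 * (2 / (1 - r) + 1) * garsiaU γ p f * (t - s) ^ γ * r * r ^ k := by
    obtain ⟨hh, hhts⟩ := hscale k
    have hhalf : (t - s) / 2 ^ (k + 1) = (t - s) / 2 ^ k / 2 := by ring
    have hpair := abs_sub_le_of_le_four_mul hp hγ hf hint (a := s + (t - s) / 2 ^ (k + 1))
      (b := s + (t - s) / 2 ^ k) (by positivity) (by linarith) (by linarith) (by linarith)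
    rw [show s + (t - s) / 2 ^ k - (s + (t - s) / 2 ^ (k + 1)) = (t - s) / 2 ^ (k + 1) by ring,
      div_two_pow_rpow (by linarith), ← hr_def] at hpair
    rw [Real.dist_eq]
    exact hpair.trans_eq (by ring)
  have hlim : Tendsto (fun k : ℕ => f (s + (t - s) / 2 ^ k)) atTop (𝓝 (f s)) :=
    (hf s ⟨hs, by linarith⟩).tendsto.comp (tendsto_nhdsWithin_iff.2
      ⟨by simpa using tendsto_const_nhds.add (tendsto_div_two_pow (t - s)),
        Eventually.of_forall fun k => ⟨by linarith [hscale k], by linarith [hscale k]⟩⟩)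
  have hgeom := dist_le_of_le_geometric_of_tendsto₀ _ _ hr hstep hlim
  rw [pow_zero, div_one, add_sub_cancel, Real.dist_eq] at hgeom
  exact hgeom.trans_eq (by rw [garsiaConst]; ring)

end

/-- Modified Garsia lemma: if
`U_{γ,p}(f)^{2p} = ∫_0^1 ∫_v^{min(4v,1)} |f(u)-f(v)|^{2p}/(u-v)^{2γp+2} du dv < ∞`,
then `f` is γ-Hölder on `[0,1]` with `‖f‖_γ ≤ c U_{γ,p}(f)` for a universal `c`. -/
theorem stmt13 (γ : ℝ) (hγ : γ ∈ Set.Ioo (0:ℝ) 1) (p : ℕ) (hp : 1 ≤ p) :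
    ∃ c > 0, ∀ f : ℝ → ℝ, ContinuousOn f (Icc 0 1) →
      IntegrableOn
        (fun q : ℝ × ℝ => |f q.2 - f q.1| ^ (2 * p) / (q.2 - q.1) ^ (2 * (p:ℝ) * γ + 2))
        garsiaRegion →
      ∀ s t : ℝ, 0 ≤ s → s < t → t ≤ 1 →
        |f t - f s| ≤
          c * (∫ q in garsiaRegion,
                |f q.2 - f q.1| ^ (2 * p) / (q.2 - q.1) ^ (2 * (p:ℝ) * γ + 2))
              ^ (1 / (2 * (p:ℝ))) * (t - s) ^ γ :=
  ⟨garsiaConst γ, garsiaConst_pos hγ.1, fun _ hf hint _ _ hs hst ht =>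
    abs_sub_le_garsiaConst_mul (by omega) hγ.1 hf hint hs hst ht⟩
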